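/- arXiv:2005.02108 — 5 statements merged into one kernel-verified Lean document; each statement's English description precedes it below -/
import Mathlib

section
/- The orthogonal complement of the span of the four Shift states in ℂ²⊗ℂ²⊗ℂ² has dimension 4 and contains no nonzero product vector a⊗b⊗c. -/
noncomputable section

def e {n : ℕ} (i : Fin n) : EuclideanSpace ℂ (Fin n) := EuclideanSpace.single i 1

def tp {m n : ℕ} (a : EuclideanSpace ℂ (Fin m)) (b : EuclideanSpace ℂ (Fin n)) :
    EuclideanSpace ℂ (Fin m × Fin n) := WithLp.toLp 2 (fun p : Fin m × Fin n => a p.1 * b p.2)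

def tp3 {l m n : ℕ} (a : EuclideanSpace ℂ (Fin l)) (b : EuclideanSpace ℂ (Fin m))
    (c : EuclideanSpace ℂ (Fin n)) : EuclideanSpace ℂ (Fin l × Fin m × Fin n) :=
  WithLp.toLp 2 (fun p : Fin l × Fin m × Fin n => a p.1 * b p.2.1 * c p.2.2)

def Sh : Fin 4 → EuclideanSpace ℂ (Fin 2 × Fin 2 × Fin 2) :=
  ![tp3 (e 0) (e 1) (e 0 - e 1), tp3 (e 1) (e 0 - e 1) (e 0),
    tp3 (e 0 - e 1) (e 0) (e 1), tp3 (e 0 + e 1) (e 0 + e 1) (e 0 + e 1)]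

lemma core_a (a0 a1 b0 b1 c0 c1 : ℂ)
    (h1 : a0 * b1 * (c0 - c1) = 0) (h2 : a1 * (b0 - b1) * c0 = 0)
    (h3 : (a0 - a1) * b0 * c1 = 0) (ha : a0 + a1 = 0) :
    ∀ i j k : Fin 2, ![a0, a1] i * ![b0, b1] j * ![c0, c1] k = 0 := by
  have ha1 : a1 = -a0 := by linear_combination ha
  subst ha1
  by_cases h0 : a0 = 0
  · intro i j k; fin_cases i <;> simp [h0]
  · have e1 : b1 * (c0 - c1) = 0 := by
      have h : a0 * (b1 * (c0 - c1)) = 0 := by linear_combination h1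
      exact (mul_eq_zero.mp h).resolve_left h0
    have e2 : (b0 - b1) * c0 = 0 := by
      have h : a0 * ((b0 - b1) * c0) = 0 := by linear_combination -h2
      exact (mul_eq_zero.mp h).resolve_left h0
    have e3 : b0 * c1 = 0 := by
      have h : a0 * (b0 * c1) = 0 := by linear_combination h3 / 2
      exact (mul_eq_zero.mp h).resolve_left h0
    by_cases hb0 : b0 = 0
    · have e4 : b1 * c0 = 0 := by linear_combination c0 * hb0 - e2
      have e5 : b1 * c1 = 0 := by linear_combination e4 - e1
      intro i j k
      fin_cases j <;> fin_cases k <;>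
        simp only [Fin.mk_zero, Fin.mk_one, Matrix.cons_val_zero, Matrix.cons_val_one,
          Matrix.head_cons]
      · linear_combination (![a0, -a0] i * c0) * hb0
      · linear_combination (![a0, -a0] i * c1) * hb0
      · linear_combination ![a0, -a0] i * e4
      · linear_combination ![a0, -a0] i * e5
    · have hc1 : c1 = 0 := (mul_eq_zero.mp e3).resolve_left hb0
      have e6 : b1 * c0 = 0 := by linear_combination e1 + b1 * hc1
      have hc0 : c0 = 0 := by
        have h : b0 * c0 = 0 := by linear_combination e2 + e6
        exact (mul_eq_zero.mp h).resolve_left hb0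
      intro i j k; fin_cases k <;> simp [hc0, hc1]

lemma core (a0 a1 b0 b1 c0 c1 : ℂ)
    (h1 : a0 * b1 * (c0 - c1) = 0) (h2 : a1 * (b0 - b1) * c0 = 0)
    (h3 : (a0 - a1) * b0 * c1 = 0)
    (h4 : (a0 + a1) * (b0 + b1) * (c0 + c1) = 0) :
    ∀ i j k : Fin 2, ![a0, a1] i * ![b0, b1] j * ![c0, c1] k = 0 := by
  rcases mul_eq_zero.mp h4 with h | hc
  · rcases mul_eq_zero.mp h with ha | hb
    · exact core_a _ _ _ _ _ _ h1 h2 h3 ha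
    · intro i j k
      have h := core_a b0 b1 c0 c1 a0 a1 (by linear_combination h3)
        (by linear_combination h1) (by linear_combination h2) hb j k i
      linear_combination h
  · intro i j k
    have h := core_a c0 c1 a0 a1 b0 b1 (by linear_combination h2)
      (by linear_combination h3) (by linear_combination h1) hc k i j
    linear_combination h

theorem shift_complement_CES :
    Module.finrank ℂ ((Submodule.span ℂ (Set.range Sh))ᗮ :
        Submodule ℂ (EuclideanSpace ℂ (Fin 2 × Fin 2 × Fin 2))) = 4 ∧
    ∀ (a b c : EuclideanSpace ℂ (Fin 2)),
      tp3 a b c ∈ (Submodule.span ℂ (Set.range Sh))ᗮ → tp3 a b c = 0 := by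
  constructor
  · -- dimension count
    have hli : LinearIndependent ℂ Sh := by
      rw [Fintype.linearIndependent_iff]
      intro g hg i
      have key : ∀ p : Fin 2 × Fin 2 × Fin 2, (∑ j, g j • Sh j) p = 0 := by
        intro p; rw [hg]; rfl
      have h0 := key (0, 1, 0)
      have h0' := key (0, 1, 1)
      have h1 := key (1, 0, 0)
      have h2 := key (0, 0, 1)
      simp [Sh, tp3, e, Fin.sum_univ_four, EuclideanSpace.single_apply,
        PiLp.sub_apply, PiLp.add_apply, PiLp.smul_apply] at h0 h0' h1 h2
      have hg0 : g 0 = 0 := by linear_combination (h0 - h0') / 2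
      have hg1 : g 1 = 0 := by linear_combination h1 - (h0 + h0') / 2
      have hg2 : g 2 = 0 := by linear_combination h2 - (h0 + h0') / 2
      have hg3 : g 3 = 0 := by linear_combination (h0 + h0') / 2
      fin_cases i <;> first | exact hg0 | exact hg1 | exact hg2 | exact hg3
    have hspan : Module.finrank ℂ (Submodule.span ℂ (Set.range Sh)) = 4 := by
      rw [finrank_span_eq_card hli]; simp
    have htot := Submodule.finrank_add_finrank_orthogonal
      (K := Submodule.span ℂ (Set.range Sh))
    rw [hspan] at htot
    have hE : Module.finrank ℂ (EuclideanSpace ℂ (Fin 2 × Fin 2 × Fin 2)) = 8 := by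
      simp [finrank_euclideanSpace]
    omega
  · intro a b c hmem
    have horth : ∀ j : Fin 4, inner ℂ (Sh j) (tp3 a b c) = (0 : ℂ) := fun j =>
      (Submodule.mem_orthogonal _ _).mp hmem (Sh j)
        (Submodule.subset_span (Set.mem_range_self j))
    have h0 := horth 0
    have h1 := horth 1
    have h2 := horth 2
    have h3 := horth 3
    simp [Sh, tp3, e, PiLp.inner_apply, RCLike.inner_apply, Fintype.sum_prod_type,
      Fin.sum_univ_two, EuclideanSpace.single_apply, PiLp.sub_apply, PiLp.add_apply,
      map_sub, map_add, map_one, map_zero] at h0 h1 h2 h3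
    have hall := core (a 0) (a 1) (b 0) (b 1) (c 0) (c 1)
      (by linear_combination h0) (by linear_combination h1)
      (by linear_combination h2) (by linear_combination h3)
    ext p
    obtain ⟨i, j, k⟩ := p
    have h := hall i j k
    show a i * b j * c k = 0
    fin_cases i <;> fin_cases j <;> fin_cases k <;> simpa using h
end
end

section
/- Let E be a positive semidefinite 3×3 Hermitian matrix on ℂ³ (Alice's side) such that the vectors (E⊗I)ψ_i, applied to the eight product states of the irreducible UPB of Eq. (4) in ℂ³⊗ℂ⁴, remain pairwise orthogonal. Then E is a scalar multiple of the identity. -/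
open scoped ComplexOrder

noncomputable section

def B : Fin 8 → EuclideanSpace ℂ (Fin 3 × Fin 4) :=
  ![tp (e 0) (e 0 - e 1), tp (e 0) (e 0 + e 1 - (2 : ℂ) • e 2), tp (e 1) (e 1 - e 2),
    tp (e 2) (e 2 - e 3), tp (e 2) ((2 : ℂ) • e 1 - e 2 - e 3), tp (e 1 - e 2) (e 0),
    tp (e 0 - e 1) (e 3), tp (e 0 + e 1 + e 2) (e 0 + e 1 + e 2 + e 3)]

def actL (M : Matrix (Fin 3) (Fin 3) ℂ) (v : EuclideanSpace ℂ (Fin 3 × Fin 4)) :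
    EuclideanSpace ℂ (Fin 3 × Fin 4) := WithLp.toLp 2 (fun p : Fin 3 × Fin 4 => ∑ k, M p.1 k * v (k, p.2))

set_option maxHeartbeats 2000000 in
theorem alice_trivial (M : Matrix (Fin 3) (Fin 3) ℂ) (hM : M.PosSemidef)
    (horth : ∀ i j : Fin 8, i ≠ j → inner ℂ (B i) (actL M (B j)) = (0 : ℂ)) :
    ∃ c : ℂ, M = c • (1 : Matrix (Fin 3) (Fin 3) ℂ) := by
  have h02 := horth 0 2 (by decide)
  have h20 := horth 2 0 (by decide)
  have h04 := horth 0 4 (by decide)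
  have h40 := horth 4 0 (by decide)
  have h23 := horth 2 3 (by decide)
  have h32 := horth 3 2 (by decide)
  have h67 := horth 6 7 (by decide)
  have h57 := horth 5 7 (by decide)
  rw [show B 0 = tp (e 0) (e 0 - e 1) from rfl,
      show B 2 = tp (e 1) (e 1 - e 2) from rfl] at h02 h20
  rw [show B 0 = tp (e 0) (e 0 - e 1) from rfl,
      show B 4 = tp (e 2) ((2 : ℂ) • e 1 - e 2 - e 3) from rfl] at h04 h40
  rw [show B 2 = tp (e 1) (e 1 - e 2) from rfl,
      show B 3 = tp (e 2) (e 2 - e 3) from rfl] at h23 h32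
  rw [show B 6 = tp (e 0 - e 1) (e 3) from rfl,
      show B 7 = tp (e 0 + e 1 + e 2) (e 0 + e 1 + e 2 + e 3) from rfl] at h67
  rw [show B 5 = tp (e 1 - e 2) (e 0) from rfl,
      show B 7 = tp (e 0 + e 1 + e 2) (e 0 + e 1 + e 2 + e 3) from rfl] at h57
  simp only [PiLp.inner_apply, Fintype.sum_prod_type, Fin.sum_univ_succ,
    Fin.sum_univ_zero, actL, tp, e] at h02 h20 h04 h40 h23 h32 h67 h57
  simp [EuclideanSpace.single_apply, Fin.sum_univ_succ, Fin.ext_iff,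
    show ((3 : Fin 4) : ℕ) = 3 from rfl] at h02 h20 h04 h40 h23 h32 h67 h57
  refine ⟨M 0 0, ?_⟩
  ext i j
  fin_cases i <;> fin_cases j <;> simp [Matrix.one_apply] <;>
    first
      | assumption
      | linear_combination -h67 + h02 + h04 - h20 - h23
      | linear_combination -h67 - h57 + h02 + h04 - h40 - h32
end
end

section
/- Let M be a positive semidefinite 4×4 Hermitian matrix on ℂ⁴ (Bob's side) such that ⟨ψ_i, (I⊗M)ψ_j⟩ = 0 for all i≠j, where ψ_1,…,ψ_8 are the eight product states of the irreducible UPB of Eq. (4) in ℂ³⊗ℂ⁴. Then M is a scalar multiple of the 4×4 identity. -/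
open scoped ComplexOrder

noncomputable section

def actR (M : Matrix (Fin 4) (Fin 4) ℂ) (v : EuclideanSpace ℂ (Fin 3 × Fin 4)) :
    EuclideanSpace ℂ (Fin 3 × Fin 4) := WithLp.toLp 2 (fun p : Fin 3 × Fin 4 => ∑ k, M p.2 k * v (p.1, k))

set_option maxHeartbeats 4000000 in
theorem bob_trivial (M : Matrix (Fin 4) (Fin 4) ℂ) (hM : M.PosSemidef)
    (horth : ∀ i j : Fin 8, i ≠ j → inner ℂ (B i) (actR M (B j)) = (0 : ℂ)) :
    ∃ c : ℂ, M = c • (1 : Matrix (Fin 4) (Fin 4) ℂ) := by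
  have h12 : (inner ℂ (tp (e 0) (e 0 - e 1)) (actR M (tp (e 0) (e 0 + e 1 - (2 : ℂ) • e 2))) : ℂ) = 0 := horth 0 1 (by decide)
  have h17 : (inner ℂ (tp (e 0) (e 0 - e 1)) (actR M (tp (e 0 - e 1) (e 3))) : ℂ) = 0 := horth 0 6 (by decide)
  have h18 : (inner ℂ (tp (e 0) (e 0 - e 1)) (actR M (tp (e 0 + e 1 + e 2) (e 0 + e 1 + e 2 + e 3))) : ℂ) = 0 := horth 0 7 (by decide)
  have h21 : (inner ℂ (tp (e 0) (e 0 + e 1 - (2 : ℂ) • e 2)) (actR M (tp (e 0) (e 0 - e 1))) : ℂ) = 0 := horth 1 0 (by decide)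
  have h27 : (inner ℂ (tp (e 0) (e 0 + e 1 - (2 : ℂ) • e 2)) (actR M (tp (e 0 - e 1) (e 3))) : ℂ) = 0 := horth 1 6 (by decide)
  have h28 : (inner ℂ (tp (e 0) (e 0 + e 1 - (2 : ℂ) • e 2)) (actR M (tp (e 0 + e 1 + e 2) (e 0 + e 1 + e 2 + e 3))) : ℂ) = 0 := horth 1 7 (by decide)
  have h36 : (inner ℂ (tp (e 1) (e 1 - e 2)) (actR M (tp (e 1 - e 2) (e 0))) : ℂ) = 0 := horth 2 5 (by decide)
  have h45 : (inner ℂ (tp (e 2) (e 2 - e 3)) (actR M (tp (e 2) ((2 : ℂ) • e 1 - e 2 - e 3))) : ℂ) = 0 := horth 3 4 (by decide)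
  have h46 : (inner ℂ (tp (e 2) (e 2 - e 3)) (actR M (tp (e 1 - e 2) (e 0))) : ℂ) = 0 := horth 3 5 (by decide)
  have h48 : (inner ℂ (tp (e 2) (e 2 - e 3)) (actR M (tp (e 0 + e 1 + e 2) (e 0 + e 1 + e 2 + e 3))) : ℂ) = 0 := horth 3 7 (by decide)
  have h64 : (inner ℂ (tp (e 1 - e 2) (e 0)) (actR M (tp (e 2) (e 2 - e 3))) : ℂ) = 0 := horth 5 3 (by decide)
  have h67 : (inner ℂ (tp (e 1 - e 2) (e 0)) (actR M (tp (e 0 - e 1) (e 3))) : ℂ) = 0 := horth 5 6 (by decide)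
  have h71 : (inner ℂ (tp (e 0 - e 1) (e 3)) (actR M (tp (e 0) (e 0 - e 1))) : ℂ) = 0 := horth 6 0 (by decide)
  have h72 : (inner ℂ (tp (e 0 - e 1) (e 3)) (actR M (tp (e 0) (e 0 + e 1 - (2 : ℂ) • e 2))) : ℂ) = 0 := horth 6 1 (by decide)
  have h82 : (inner ℂ (tp (e 0 + e 1 + e 2) (e 0 + e 1 + e 2 + e 3)) (actR M (tp (e 0) (e 0 + e 1 - (2 : ℂ) • e 2))) : ℂ) = 0 := horth 7 1 (by decide)
  simp only [tp, actR, e, PiLp.inner_apply, RCLike.inner_apply, Fintype.sum_prod_type,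
      Fin.sum_univ_three, Fin.sum_univ_four, PiLp.sub_apply, PiLp.add_apply, PiLp.smul_apply,
      EuclideanSpace.single_apply, smul_eq_mul] at h12
  norm_num [Fin.ext_iff] at h12
  simp (config := { decide := true, failIfUnchanged := false }) only [] at h12
  norm_num [Complex.conj_ofNat] at h12
  simp only [tp, actR, e, PiLp.inner_apply, RCLike.inner_apply, Fintype.sum_prod_type,
      Fin.sum_univ_three, Fin.sum_univ_four, PiLp.sub_apply, PiLp.add_apply, PiLp.smul_apply,
      EuclideanSpace.single_apply, smul_eq_mul] at h17
  norm_num [Fin.ext_iff] at h17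
  simp (config := { decide := true, failIfUnchanged := false }) only [] at h17
  norm_num [Complex.conj_ofNat] at h17
  simp only [tp, actR, e, PiLp.inner_apply, RCLike.inner_apply, Fintype.sum_prod_type,
      Fin.sum_univ_three, Fin.sum_univ_four, PiLp.sub_apply, PiLp.add_apply, PiLp.smul_apply,
      EuclideanSpace.single_apply, smul_eq_mul] at h18
  norm_num [Fin.ext_iff] at h18
  simp (config := { decide := true, failIfUnchanged := false }) only [] at h18
  norm_num [Complex.conj_ofNat] at h18
  simp only [tp, actR, e, PiLp.inner_apply, RCLike.inner_apply, Fintype.sum_prod_type,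
      Fin.sum_univ_three, Fin.sum_univ_four, PiLp.sub_apply, PiLp.add_apply, PiLp.smul_apply,
      EuclideanSpace.single_apply, smul_eq_mul] at h21
  norm_num [Fin.ext_iff] at h21
  simp (config := { decide := true, failIfUnchanged := false }) only [] at h21
  norm_num [Complex.conj_ofNat] at h21
  simp only [tp, actR, e, PiLp.inner_apply, RCLike.inner_apply, Fintype.sum_prod_type,
      Fin.sum_univ_three, Fin.sum_univ_four, PiLp.sub_apply, PiLp.add_apply, PiLp.smul_apply,
      EuclideanSpace.single_apply, smul_eq_mul] at h27
  norm_num [Fin.ext_iff] at h27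
  simp (config := { decide := true, failIfUnchanged := false }) only [] at h27
  norm_num [Complex.conj_ofNat] at h27
  simp only [tp, actR, e, PiLp.inner_apply, RCLike.inner_apply, Fintype.sum_prod_type,
      Fin.sum_univ_three, Fin.sum_univ_four, PiLp.sub_apply, PiLp.add_apply, PiLp.smul_apply,
      EuclideanSpace.single_apply, smul_eq_mul] at h28
  norm_num [Fin.ext_iff] at h28
  simp (config := { decide := true, failIfUnchanged := false }) only [] at h28
  norm_num [Complex.conj_ofNat] at h28
  simp only [tp, actR, e, PiLp.inner_apply, RCLike.inner_apply, Fintype.sum_prod_type,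
      Fin.sum_univ_three, Fin.sum_univ_four, PiLp.sub_apply, PiLp.add_apply, PiLp.smul_apply,
      EuclideanSpace.single_apply, smul_eq_mul] at h36
  norm_num [Fin.ext_iff] at h36
  simp (config := { decide := true, failIfUnchanged := false }) only [] at h36
  norm_num [Complex.conj_ofNat] at h36
  simp only [tp, actR, e, PiLp.inner_apply, RCLike.inner_apply, Fintype.sum_prod_type,
      Fin.sum_univ_three, Fin.sum_univ_four, PiLp.sub_apply, PiLp.add_apply, PiLp.smul_apply,
      EuclideanSpace.single_apply, smul_eq_mul] at h45
  norm_num [Fin.ext_iff] at h45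
  simp (config := { decide := true, failIfUnchanged := false }) only [] at h45
  norm_num [Complex.conj_ofNat] at h45
  simp only [tp, actR, e, PiLp.inner_apply, RCLike.inner_apply, Fintype.sum_prod_type,
      Fin.sum_univ_three, Fin.sum_univ_four, PiLp.sub_apply, PiLp.add_apply, PiLp.smul_apply,
      EuclideanSpace.single_apply, smul_eq_mul] at h46
  norm_num [Fin.ext_iff] at h46
  simp (config := { decide := true, failIfUnchanged := false }) only [] at h46
  norm_num [Complex.conj_ofNat] at h46
  simp only [tp, actR, e, PiLp.inner_apply, RCLike.inner_apply, Fintype.sum_prod_type,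
      Fin.sum_univ_three, Fin.sum_univ_four, PiLp.sub_apply, PiLp.add_apply, PiLp.smul_apply,
      EuclideanSpace.single_apply, smul_eq_mul] at h48
  norm_num [Fin.ext_iff] at h48
  simp (config := { decide := true, failIfUnchanged := false }) only [] at h48
  norm_num [Complex.conj_ofNat] at h48
  simp only [tp, actR, e, PiLp.inner_apply, RCLike.inner_apply, Fintype.sum_prod_type,
      Fin.sum_univ_three, Fin.sum_univ_four, PiLp.sub_apply, PiLp.add_apply, PiLp.smul_apply,
      EuclideanSpace.single_apply, smul_eq_mul] at h64
  norm_num [Fin.ext_iff] at h64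
  simp (config := { decide := true, failIfUnchanged := false }) only [] at h64
  norm_num [Complex.conj_ofNat] at h64
  simp only [tp, actR, e, PiLp.inner_apply, RCLike.inner_apply, Fintype.sum_prod_type,
      Fin.sum_univ_three, Fin.sum_univ_four, PiLp.sub_apply, PiLp.add_apply, PiLp.smul_apply,
      EuclideanSpace.single_apply, smul_eq_mul] at h67
  norm_num [Fin.ext_iff] at h67
  simp (config := { decide := true, failIfUnchanged := false }) only [] at h67
  norm_num [Complex.conj_ofNat] at h67
  simp only [tp, actR, e, PiLp.inner_apply, RCLike.inner_apply, Fintype.sum_prod_type,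
      Fin.sum_univ_three, Fin.sum_univ_four, PiLp.sub_apply, PiLp.add_apply, PiLp.smul_apply,
      EuclideanSpace.single_apply, smul_eq_mul] at h71
  norm_num [Fin.ext_iff] at h71
  simp (config := { decide := true, failIfUnchanged := false }) only [] at h71
  norm_num [Complex.conj_ofNat] at h71
  simp only [tp, actR, e, PiLp.inner_apply, RCLike.inner_apply, Fintype.sum_prod_type,
      Fin.sum_univ_three, Fin.sum_univ_four, PiLp.sub_apply, PiLp.add_apply, PiLp.smul_apply,
      EuclideanSpace.single_apply, smul_eq_mul] at h72
  norm_num [Fin.ext_iff] at h72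
  simp (config := { decide := true, failIfUnchanged := false }) only [] at h72
  norm_num [Complex.conj_ofNat] at h72
  simp only [tp, actR, e, PiLp.inner_apply, RCLike.inner_apply, Fintype.sum_prod_type,
      Fin.sum_univ_three, Fin.sum_univ_four, PiLp.sub_apply, PiLp.add_apply, PiLp.smul_apply,
      EuclideanSpace.single_apply, smul_eq_mul] at h82
  norm_num [Fin.ext_iff] at h82
  simp (config := { decide := true, failIfUnchanged := false }) only [] at h82
  norm_num [Complex.conj_ofNat] at h82
  refine ⟨M 3 3, ?_⟩
  ext i j
  fin_cases i <;> fin_cases j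
  · show M 0 0 = (M 3 3 • (1 : Matrix (Fin 4) (Fin 4) ℂ)) 0 0
    simp [Matrix.one_apply]
    linear_combination (1/6 : ℂ) * h12 + (2/3 : ℂ) * h17 + (1/3 : ℂ) * h27 + (-1/6 : ℂ) * h18 + (1/6 : ℂ) * h28 + (-1/1 : ℂ) * h36 + (-2/3 : ℂ) * h45 + (1/3 : ℂ) * h46 + (1/3 : ℂ) * h48 + (1/2 : ℂ) * h21 + (1/2 : ℂ) * h71 + (-5/6 : ℂ) * h72 + (1/3 : ℂ) * h82 + (-1/1 : ℂ) * h64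
  · show M 0 1 = (M 3 3 • (1 : Matrix (Fin 4) (Fin 4) ℂ)) 0 1
    simp [Matrix.one_apply]
    linear_combination (1/3 : ℂ) * h12 + (-1/6 : ℂ) * h17 + (1/6 : ℂ) * h27 + (1/6 : ℂ) * h18 + (-1/6 : ℂ) * h28 + (1/1 : ℂ) * h36 + (1/6 : ℂ) * h45 + (2/3 : ℂ) * h46 + (1/6 : ℂ) * h48 + (1/1 : ℂ) * h67 + (-1/2 : ℂ) * h21 + (-1/2 : ℂ) * h71 + (-1/6 : ℂ) * h72 + (1/6 : ℂ) * h82 + (-1/1 : ℂ) * h64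
  · show M 0 2 = (M 3 3 • (1 : Matrix (Fin 4) (Fin 4) ℂ)) 0 2
    simp [Matrix.one_apply]
    linear_combination (1/1 : ℂ) * h67 + (-1/1 : ℂ) * h64
  · show M 0 3 = (M 3 3 • (1 : Matrix (Fin 4) (Fin 4) ℂ)) 0 3
    simp [Matrix.one_apply]
    linear_combination (1/1 : ℂ) * h67
  · show M 1 0 = (M 3 3 • (1 : Matrix (Fin 4) (Fin 4) ℂ)) 1 0
    simp [Matrix.one_apply]
    linear_combination (1/6 : ℂ) * h12 + (1/6 : ℂ) * h17 + (1/6 : ℂ) * h27 + (-1/6 : ℂ) * h18 + (-1/6 : ℂ) * h28 + (1/1 : ℂ) * h36 + (-1/6 : ℂ) * h45 + (-2/3 : ℂ) * h46 + (-1/6 : ℂ) * h48 + (1/1 : ℂ) * h67 + (1/2 : ℂ) * h71 + (-1/6 : ℂ) * h72 + (1/6 : ℂ) * h82 + (-1/1 : ℂ) * h64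
  · show M 1 1 = (M 3 3 • (1 : Matrix (Fin 4) (Fin 4) ℂ)) 1 1
    simp [Matrix.one_apply]
    linear_combination (1/1 : ℂ) * h17 + (1/3 : ℂ) * h27 + (-1/2 : ℂ) * h18 + (1/6 : ℂ) * h28 + (-1/1 : ℂ) * h36 + (-1/3 : ℂ) * h45 + (5/3 : ℂ) * h46 + (2/3 : ℂ) * h48 + (-1/2 : ℂ) * h71 + (-5/6 : ℂ) * h72 + (1/3 : ℂ) * h82 + (-1/1 : ℂ) * h64
  · show M 1 2 = (M 3 3 • (1 : Matrix (Fin 4) (Fin 4) ℂ)) 1 2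
    simp [Matrix.one_apply]
    linear_combination (1/3 : ℂ) * h12 + (1/3 : ℂ) * h17 + (-1/3 : ℂ) * h18 + (1/1 : ℂ) * h67 + (-1/1 : ℂ) * h64
  · show M 1 3 = (M 3 3 • (1 : Matrix (Fin 4) (Fin 4) ℂ)) 1 3
    simp [Matrix.one_apply]
    linear_combination (-1/1 : ℂ) * h17 + (1/1 : ℂ) * h67
  · show M 2 0 = (M 3 3 • (1 : Matrix (Fin 4) (Fin 4) ℂ)) 2 0
    simp [Matrix.one_apply]
    linear_combination (1/6 : ℂ) * h12 + (1/6 : ℂ) * h17 + (1/6 : ℂ) * h27 + (-1/6 : ℂ) * h18 + (-1/6 : ℂ) * h28 + (-1/6 : ℂ) * h45 + (-2/3 : ℂ) * h46 + (-1/6 : ℂ) * h48 + (1/1 : ℂ) * h67 + (1/2 : ℂ) * h71 + (-1/6 : ℂ) * h72 + (1/6 : ℂ) * h82 + (-1/1 : ℂ) * h64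
  · show M 2 1 = (M 3 3 • (1 : Matrix (Fin 4) (Fin 4) ℂ)) 2 1
    simp [Matrix.one_apply]
    linear_combination (1/6 : ℂ) * h12 + (1/6 : ℂ) * h17 + (1/6 : ℂ) * h27 + (-1/6 : ℂ) * h18 + (-1/6 : ℂ) * h28 + (1/6 : ℂ) * h45 + (2/3 : ℂ) * h46 + (1/6 : ℂ) * h48 + (1/1 : ℂ) * h67 + (-1/2 : ℂ) * h71 + (-1/6 : ℂ) * h72 + (1/6 : ℂ) * h82 + (-1/1 : ℂ) * h64
  · show M 2 2 = (M 3 3 • (1 : Matrix (Fin 4) (Fin 4) ℂ)) 2 2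
    simp [Matrix.one_apply]
    linear_combination (1/6 : ℂ) * h12 + (2/3 : ℂ) * h17 + (2/3 : ℂ) * h27 + (-1/6 : ℂ) * h18 + (-1/6 : ℂ) * h28 + (-1/2 : ℂ) * h45 + (1/1 : ℂ) * h46 + (1/2 : ℂ) * h48 + (-2/3 : ℂ) * h72 + (1/6 : ℂ) * h82 + (-1/1 : ℂ) * h64
  · show M 2 3 = (M 3 3 • (1 : Matrix (Fin 4) (Fin 4) ℂ)) 2 3
    simp [Matrix.one_apply]
    linear_combination (-1/2 : ℂ) * h17 + (-1/2 : ℂ) * h27 + (1/1 : ℂ) * h67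
  · show M 3 0 = (M 3 3 • (1 : Matrix (Fin 4) (Fin 4) ℂ)) 3 0
    simp [Matrix.one_apply]
    linear_combination (1/6 : ℂ) * h12 + (1/6 : ℂ) * h17 + (1/6 : ℂ) * h27 + (-1/6 : ℂ) * h18 + (-1/6 : ℂ) * h28 + (-1/6 : ℂ) * h45 + (1/3 : ℂ) * h46 + (-1/6 : ℂ) * h48 + (1/1 : ℂ) * h67 + (1/2 : ℂ) * h71 + (-1/6 : ℂ) * h72 + (1/6 : ℂ) * h82 + (-1/1 : ℂ) * h64
  · show M 3 1 = (M 3 3 • (1 : Matrix (Fin 4) (Fin 4) ℂ)) 3 1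
    simp [Matrix.one_apply]
    linear_combination (1/6 : ℂ) * h12 + (1/6 : ℂ) * h17 + (1/6 : ℂ) * h27 + (-1/6 : ℂ) * h18 + (-1/6 : ℂ) * h28 + (-1/6 : ℂ) * h45 + (1/3 : ℂ) * h46 + (-1/6 : ℂ) * h48 + (1/1 : ℂ) * h67 + (-1/2 : ℂ) * h71 + (-1/6 : ℂ) * h72 + (1/6 : ℂ) * h82 + (-1/1 : ℂ) * h64
  · show M 3 2 = (M 3 3 • (1 : Matrix (Fin 4) (Fin 4) ℂ)) 3 2
    simp [Matrix.one_apply]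
    linear_combination (1/6 : ℂ) * h12 + (1/6 : ℂ) * h17 + (1/6 : ℂ) * h27 + (-1/6 : ℂ) * h18 + (-1/6 : ℂ) * h28 + (-1/6 : ℂ) * h45 + (1/3 : ℂ) * h46 + (-1/6 : ℂ) * h48 + (1/1 : ℂ) * h67 + (-2/3 : ℂ) * h72 + (1/6 : ℂ) * h82 + (-1/1 : ℂ) * h64
  · show M 3 3 = (M 3 3 • (1 : Matrix (Fin 4) (Fin 4) ℂ)) 3 3
    simp [Matrix.one_apply]
end
end

section
/- Any set of at most two pairwise orthogonal product vectors in ℂ^{d₁}⊗ℂ^{d₂} (d₁,d₂ ≥ 2) can be extended to a complete orthogonal product basis of ℂ^{d₁}⊗ℂ^{d₂}. -/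
noncomputable section

open Module

lemma inner_tp {m n : ℕ} (x x' : EuclideanSpace ℂ (Fin m)) (y y' : EuclideanSpace ℂ (Fin n)) :
    (inner ℂ (tp x y) (tp x' y') : ℂ) = inner ℂ x x' * inner ℂ y y' := by
  simp only [PiLp.inner_apply, RCLike.inner_apply, tp]
  rw [Fintype.sum_prod_type, Finset.sum_mul_sum]
  apply Finset.sum_congr rfl; intro i _
  apply Finset.sum_congr rfl; intro j _
  simp [map_mul]; ring

lemma tp_ne_zero {m n : ℕ} {x : EuclideanSpace ℂ (Fin m)} {y : EuclideanSpace ℂ (Fin n)}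
    (hx : x ≠ 0) (hy : y ≠ 0) : tp x y ≠ 0 := by
  obtain ⟨i, hi⟩ : ∃ i, x i ≠ 0 := by
    by_contra h; push_neg at h; exact hx (PiLp.ext h)
  obtain ⟨j, hj⟩ : ∃ j, y j ≠ 0 := by
    by_contra h; push_neg at h; exact hy (PiLp.ext h)
  intro h
  have := congrArg (fun f => f (i, j)) h
  exact (mul_ne_zero hi hj) (by simpa [tp] using this)

lemma tp_nz_left {m n : ℕ} {x : EuclideanSpace ℂ (Fin m)} {y : EuclideanSpace ℂ (Fin n)}
    (h : tp x y ≠ 0) : x ≠ 0 := by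
  rintro rfl; apply h; ext p; show (0 : EuclideanSpace ℂ (Fin m)) p.1 * y p.2 = _
  simp

lemma tp_nz_right {m n : ℕ} {x : EuclideanSpace ℂ (Fin m)} {y : EuclideanSpace ℂ (Fin n)}
    (h : tp x y ≠ 0) : y ≠ 0 := by
  rintro rfl; apply h; ext p; show x p.1 * (0 : EuclideanSpace ℂ (Fin n)) p.2 = _
  simp

lemma span_top_of_orth {ι E : Type*} [Fintype ι] [NormedAddCommGroup E]
    [InnerProductSpace ℂ E] [FiniteDimensional ℂ E]
    (hcard : Fintype.card ι = finrank ℂ E) (w : ι → E)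
    (hnz : ∀ p, w p ≠ 0) (horth : ∀ p q, p ≠ q → (inner ℂ (w p) (w q) : ℂ) = 0) :
    Submodule.span ℂ (Set.range w) = ⊤ := by
  classical
  set w' : ι → E := fun p => (‖w p‖ : ℂ)⁻¹ • w p with hw'
  have hnorm : ∀ p, (‖w p‖ : ℂ) ≠ 0 := fun p => by
    simpa using norm_ne_zero_iff.2 (hnz p)
  have hON : Orthonormal ℂ w' := by
    rw [orthonormal_iff_ite]
    intro p q
    rw [hw']
    simp only [inner_smul_left, inner_smul_right, map_inv₀, Complex.conj_ofReal]
    by_cases h : p = q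
    · subst h
      rw [inner_self_eq_norm_sq_to_K, sq]
      rw [if_pos rfl]
      field_simp [hnorm p]
      rfl
    · rw [horth p q h, if_neg h]; ring
  have hli := hON.linearIndependent
  have hsp : Submodule.span ℂ (Set.range w') = ⊤ :=
    hli.span_eq_top_of_card_eq_finrank' hcard
  refine le_antisymm le_top ?_
  rw [← hsp]
  apply Submodule.span_le.2
  rintro _ ⟨p, rfl⟩
  exact Submodule.smul_mem _ _ (Submodule.subset_span ⟨p, rfl⟩)

lemma exists_onb_one {d : ℕ} (j0 : Fin d) (x : EuclideanSpace ℂ (Fin d)) (hx : ‖x‖ = 1) :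
    ∃ u : OrthonormalBasis (Fin d) ℂ (EuclideanSpace ℂ (Fin d)), u j0 = x := by
  have hcard : finrank ℂ (EuclideanSpace ℂ (Fin d)) = Fintype.card (Fin d) := by simp
  have hON : Orthonormal ℂ (Set.restrict {j0} (fun _ => x)) := by
    rw [orthonormal_iff_ite]
    intro p q
    have : p = q := Subsingleton.elim p q
    subst this
    rw [if_pos rfl]
    simp [Set.restrict, inner_self_eq_norm_sq_to_K, hx]
  obtain ⟨u, hu⟩ := hON.exists_orthonormalBasis_extension_of_card_eq hcard
  exact ⟨u, hu _ rfl⟩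

lemma exists_onb_two {d : ℕ} (i0 i1 : Fin d) (hne : i0 ≠ i1)
    (x y : EuclideanSpace ℂ (Fin d))
    (hx : ‖x‖ = 1) (hy : ‖y‖ = 1) (hxy : (inner ℂ x y : ℂ) = 0) :
    ∃ u : OrthonormalBasis (Fin d) ℂ (EuclideanSpace ℂ (Fin d)),
      u i0 = x ∧ u i1 = y := by
  classical
  have hcard : finrank ℂ (EuclideanSpace ℂ (Fin d)) = Fintype.card (Fin d) := by simp
  set v : Fin d → EuclideanSpace ℂ (Fin d) := fun i => if i = i0 then x else y with hv
  have hON : Orthonormal ℂ (Set.restrict {i0, i1} v) := by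
    rw [orthonormal_iff_ite]
    rintro ⟨p, hp⟩ ⟨q, hq⟩
    have hyx : (inner ℂ y x : ℂ) = 0 := by rw [← inner_conj_symm, hxy, map_zero]
    rcases hp with rfl | hp <;> [skip; rcases hp with rfl] <;>
      rcases hq with rfl | hq <;> [skip; rcases hq with rfl; skip; rcases hq with rfl] <;>
      simp [Set.restrict, hv, hne, hne.symm, Subtype.ext_iff, inner_self_eq_norm_sq_to_K, hx, hy, hxy, hyx]
  obtain ⟨u, hu⟩ := hON.exists_orthonormalBasis_extension_of_card_eq hcard
  refine ⟨u, ?_, ?_⟩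
  · rw [hu i0 (by simp)]; simp [hv]
  · rw [hu i1 (by simp)]; simp [hv, hne.symm]

lemma main_lemma {d₁ d₂ : ℕ}
    (a0 a1 : EuclideanSpace ℂ (Fin d₁)) (b0 b1 : EuclideanSpace ℂ (Fin d₂))
    (ha0 : a0 ≠ 0) (ha1 : a1 ≠ 0) (hb0 : b0 ≠ 0) (hb1 : b1 ≠ 0)
    (haa : (inner ℂ a0 a1 : ℂ) = 0)
    (i0 i1 : Fin d₁) (hne : i0 ≠ i1) (j0 : Fin d₂) :
    ∃ W : Fin d₁ × Fin d₂ → EuclideanSpace ℂ (Fin d₁ × Fin d₂),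
      (∀ p, ∃ x y, W p = tp x y) ∧ (∀ p, W p ≠ 0) ∧
      (∀ p q, p ≠ q → (inner ℂ (W p) (W q) : ℂ) = 0) ∧
      W (i0, j0) = tp a0 b0 ∧ W (i1, j0) = tp a1 b1 := by
  classical
  have hna0 : (‖a0‖ : ℂ) ≠ 0 := by simpa using norm_ne_zero_iff.2 ha0
  have hna1 : (‖a1‖ : ℂ) ≠ 0 := by simpa using norm_ne_zero_iff.2 ha1
  have hnb0 : (‖b0‖ : ℂ) ≠ 0 := by simpa using norm_ne_zero_iff.2 hb0
  have hnb1 : (‖b1‖ : ℂ) ≠ 0 := by simpa using norm_ne_zero_iff.2 hb1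
  set a0n := (‖a0‖ : ℂ)⁻¹ • a0 with ha0n
  set a1n := (‖a1‖ : ℂ)⁻¹ • a1 with ha1n
  set b0n := (‖b0‖ : ℂ)⁻¹ • b0 with hb0n
  set b1n := (‖b1‖ : ℂ)⁻¹ • b1 with hb1n
  have ha0nn : ‖a0n‖ = 1 := by
    rw [ha0n, norm_smul]; simp [norm_ne_zero_iff.2 ha0]
  have ha1nn : ‖a1n‖ = 1 := by
    rw [ha1n, norm_smul]; simp [norm_ne_zero_iff.2 ha1]
  have hb0nn : ‖b0n‖ = 1 := by
    rw [hb0n, norm_smul]; simp [norm_ne_zero_iff.2 hb0]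
  have hb1nn : ‖b1n‖ = 1 := by
    rw [hb1n, norm_smul]; simp [norm_ne_zero_iff.2 hb1]
  have haan : (inner ℂ a0n a1n : ℂ) = 0 := by
    rw [ha0n, ha1n, inner_smul_left, inner_smul_right, haa]; ring
  obtain ⟨u, hu0, hu1⟩ := exists_onb_two i0 i1 hne a0n a1n ha0nn ha1nn haan
  obtain ⟨v, hv0⟩ := exists_onb_one j0 b0n hb0nn
  obtain ⟨w, hw0⟩ := exists_onb_one j0 b1n hb1nn
  set A : Fin d₁ → EuclideanSpace ℂ (Fin d₁) :=
    fun i => if i = i0 then a0 else if i = i1 then a1 else u i with hA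
  set B : Fin d₁ → Fin d₂ → EuclideanSpace ℂ (Fin d₂) :=
    fun i j => if i = i0 then (‖b0‖ : ℂ) • v j else if i = i1 then (‖b1‖ : ℂ) • w j else v j
    with hB
  have hAu : ∀ i, ∃ c : ℂ, c ≠ 0 ∧ A i = c • u i := by
    intro i
    simp only [hA]
    by_cases h : i = i0
    · subst h; refine ⟨‖a0‖, hna0, ?_⟩
      rw [if_pos rfl, hu0, ha0n, smul_smul, mul_inv_cancel₀ hna0, one_smul]
    · by_cases h' : i = i1
      · subst h'; refine ⟨‖a1‖, hna1, ?_⟩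
        rw [if_neg h, if_pos rfl, hu1, ha1n, smul_smul, mul_inv_cancel₀ hna1, one_smul]
      · exact ⟨1, one_ne_zero, by rw [if_neg h, if_neg h', one_smul]⟩
  have hBo : ∀ i, ∃ (c : ℂ) (β : OrthonormalBasis (Fin d₂) ℂ (EuclideanSpace ℂ (Fin d₂))),
      c ≠ 0 ∧ ∀ j, B i j = c • β j := by
    intro i
    simp only [hB]
    by_cases h : i = i0
    · exact ⟨‖b0‖, v, hnb0, fun j => by rw [if_pos h]⟩
    · by_cases h' : i = i1
      · exact ⟨‖b1‖, w, hnb1, fun j => by rw [if_neg h, if_pos h']⟩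
      · exact ⟨1, v, one_ne_zero, fun j => by rw [if_neg h, if_neg h', one_smul]⟩
  refine ⟨fun p => tp (A p.1) (B p.1 p.2), fun p => ⟨_, _, rfl⟩, ?_, ?_, ?_, ?_⟩
  · rintro ⟨i, j⟩
    obtain ⟨c, hc, hAc⟩ := hAu i
    obtain ⟨c', β, hc', hBc⟩ := hBo i
    exact tp_ne_zero (hAc ▸ smul_ne_zero hc (u.orthonormal.ne_zero i))
      (hBc j ▸ smul_ne_zero hc' (β.orthonormal.ne_zero j))
  · rintro ⟨i, j⟩ ⟨i', j'⟩ hpq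
    rw [inner_tp]
    by_cases hii : i = i'
    · subst hii
      have hjj : j ≠ j' := fun h => hpq (by rw [h])
      obtain ⟨c', β, hc', hBc⟩ := hBo i
      rw [hBc j, hBc j', inner_smul_left, inner_smul_right,
        orthonormal_iff_ite.1 β.orthonormal j j', if_neg hjj]
      ring
    · obtain ⟨c, hc, hAc⟩ := hAu i
      obtain ⟨c2, hc2, hAc2⟩ := hAu i'
      rw [hAc, hAc2, inner_smul_left, inner_smul_right,
        orthonormal_iff_ite.1 u.orthonormal i i', if_neg hii]
      ring
  · show tp (A i0) (B i0 j0) = tp a0 b0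
    simp only [hA, hB, if_true, eq_self_iff_true]
    rw [hv0, hb0n, smul_smul, mul_inv_cancel₀ hnb0, one_smul]
  · show tp (A i1) (B i1 j0) = tp a1 b1
    simp only [hA, hB, if_true, eq_self_iff_true, if_neg hne.symm]
    rw [hw0, hb1n, smul_smul, mul_inv_cancel₀ hnb1, one_smul]

/-- swap of coordinates -/
def sw {m n : ℕ} (f : EuclideanSpace ℂ (Fin m × Fin n)) :
    EuclideanSpace ℂ (Fin n × Fin m) := WithLp.toLp 2 (fun p : Fin n × Fin m => f (p.2, p.1))

lemma sw_tp {m n : ℕ} (x : EuclideanSpace ℂ (Fin m)) (y : EuclideanSpace ℂ (Fin n)) :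
    sw (tp x y) = tp y x := by
  ext p; show x p.2 * y p.1 = y p.1 * x p.2; ring

lemma sw_ne_zero {m n : ℕ} {f : EuclideanSpace ℂ (Fin m × Fin n)} (hf : f ≠ 0) : sw f ≠ 0 := by
  intro h
  apply hf
  ext p
  have := congrArg (fun g => g (p.2, p.1)) h
  exact this

lemma sw_inner {m n : ℕ} (f g : EuclideanSpace ℂ (Fin m × Fin n)) :
    (inner ℂ (sw f) (sw g) : ℂ) = inner ℂ f g := by
  simp only [PiLp.inner_apply, RCLike.inner_apply, sw]
  exact Fintype.sum_equiv (Equiv.prodComm _ _) _ _ (fun p => rfl)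

theorem extend_two_product_vectors {d₁ d₂ : ℕ} (h1 : 2 ≤ d₁) (h2 : 2 ≤ d₂)
    (k : ℕ) (hk : k ≤ 2)
    (a : Fin k → EuclideanSpace ℂ (Fin d₁)) (b : Fin k → EuclideanSpace ℂ (Fin d₂))
    (hnz : ∀ i, tp (a i) (b i) ≠ 0)
    (horth : ∀ i j, i ≠ j → inner ℂ (tp (a i) (b i)) (tp (a j) (b j)) = (0 : ℂ)) :
    ∃ w : Fin (d₁ * d₂) → EuclideanSpace ℂ (Fin d₁ × Fin d₂),
      (∀ p, ∃ x y, w p = tp x y) ∧ (∀ p, w p ≠ 0) ∧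
      (∀ p q, p ≠ q → inner ℂ (w p) (w q) = (0 : ℂ)) ∧
      Submodule.span ℂ (Set.range w) = ⊤ ∧
      (∀ i : Fin k, ∃ p, w p = tp (a i) (b i)) := by
  classical
  -- Step 1: reduce to two vectors with orthogonality in one factor
  have key : ∃ (a0 a1 : EuclideanSpace ℂ (Fin d₁)) (b0 b1 : EuclideanSpace ℂ (Fin d₂)),
      a0 ≠ 0 ∧ a1 ≠ 0 ∧ b0 ≠ 0 ∧ b1 ≠ 0 ∧
      ((inner ℂ a0 a1 : ℂ) = 0 ∨ (inner ℂ b0 b1 : ℂ) = 0) ∧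
      (∀ i : Fin k, tp (a i) (b i) = tp a0 b0 ∨ tp (a i) (b i) = tp a1 b1) := by
    interval_cases k
    · -- k = 0
      refine ⟨EuclideanSpace.single ⟨0, by omega⟩ 1, EuclideanSpace.single ⟨1, by omega⟩ 1,
        EuclideanSpace.single ⟨0, by omega⟩ 1, EuclideanSpace.single ⟨0, by omega⟩ 1,
        ?_, ?_, ?_, ?_, Or.inl ?_, fun i => i.elim0⟩
      · intro h; have := congrArg (fun f => f ⟨0, by omega⟩) h; simp at this
      · intro h; have := congrArg (fun f => f ⟨1, by omega⟩) h; simp at this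
      · intro h; have := congrArg (fun f => f ⟨0, by omega⟩) h; simp at this
      · intro h; have := congrArg (fun f => f ⟨0, by omega⟩) h; simp at this
      · rw [EuclideanSpace.inner_single_left]
        simp [EuclideanSpace.single_apply, Fin.ext_iff]
    · -- k = 1
      have ha0 : a 0 ≠ 0 := tp_nz_left (hnz 0)
      have hb0 : b 0 ≠ 0 := tp_nz_right (hnz 0)
      have hna0 : (‖a 0‖ : ℂ) ≠ 0 := by simpa using norm_ne_zero_iff.2 ha0
      have ha0nn : ‖(‖a 0‖ : ℂ)⁻¹ • a 0‖ = 1 := by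
        rw [norm_smul]; simp [norm_ne_zero_iff.2 ha0]
      obtain ⟨u, hu0⟩ := exists_onb_one (⟨0, by omega⟩ : Fin d₁) _ ha0nn
      have hne : (⟨0, by omega⟩ : Fin d₁) ≠ ⟨1, by omega⟩ := by simp [Fin.ext_iff]
      refine ⟨a 0, u ⟨1, by omega⟩, b 0, b 0, ha0,
        u.orthonormal.ne_zero _, hb0, hb0, Or.inl ?_, fun i => ?_⟩
      · have : a 0 = (‖a 0‖ : ℂ) • ((‖a 0‖ : ℂ)⁻¹ • a 0) := by
          rw [smul_smul, mul_inv_cancel₀ hna0, one_smul]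
        rw [this, ← hu0, inner_smul_left,
          orthonormal_iff_ite.1 u.orthonormal, if_neg hne]
        ring
      · left
        have : i = 0 := Subsingleton.elim i 0
        rw [this]
    · -- k = 2
      have h01 : (0 : Fin 2) ≠ 1 := by decide
      have := horth 0 1 h01
      rw [inner_tp] at this
      rcases mul_eq_zero.1 this with h | h
      · exact ⟨a 0, a 1, b 0, b 1, tp_nz_left (hnz 0), tp_nz_left (hnz 1),
          tp_nz_right (hnz 0), tp_nz_right (hnz 1), Or.inl h, fun i => by
            fin_cases i
            · exact Or.inl rfl
            · exact Or.inr rfl⟩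
      · exact ⟨a 0, a 1, b 0, b 1, tp_nz_left (hnz 0), tp_nz_left (hnz 1),
          tp_nz_right (hnz 0), tp_nz_right (hnz 1), Or.inr h, fun i => by
            fin_cases i
            · exact Or.inl rfl
            · exact Or.inr rfl⟩
  obtain ⟨a0, a1, b0, b1, ha0, ha1, hb0, hb1, hcase, hmem⟩ := key
  -- Step 2: build the product family on Fin d₁ × Fin d₂
  have key2 : ∃ W : Fin d₁ × Fin d₂ → EuclideanSpace ℂ (Fin d₁ × Fin d₂),
      (∀ p, ∃ x y, W p = tp x y) ∧ (∀ p, W p ≠ 0) ∧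
      (∀ p q, p ≠ q → (inner ℂ (W p) (W q) : ℂ) = 0) ∧
      (∃ p, W p = tp a0 b0) ∧ (∃ p, W p = tp a1 b1) := by
    rcases hcase with haa | hbb
    · have hne : (⟨0, by omega⟩ : Fin d₁) ≠ ⟨1, by omega⟩ := by simp [Fin.ext_iff]
      obtain ⟨W, hW1, hW2, hW3, hW4, hW5⟩ :=
        main_lemma a0 a1 b0 b1 ha0 ha1 hb0 hb1 haa ⟨0, by omega⟩ ⟨1, by omega⟩ hne
          (⟨0, by omega⟩ : Fin d₂)
      exact ⟨W, hW1, hW2, hW3, ⟨_, hW4⟩, ⟨_, hW5⟩⟩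
    · have hne : (⟨0, by omega⟩ : Fin d₂) ≠ ⟨1, by omega⟩ := by simp [Fin.ext_iff]
      obtain ⟨W, hW1, hW2, hW3, hW4, hW5⟩ :=
        main_lemma b0 b1 a0 a1 hb0 hb1 ha0 ha1 hbb ⟨0, by omega⟩ ⟨1, by omega⟩ hne
          (⟨0, by omega⟩ : Fin d₁)
      refine ⟨fun p => sw (W (p.2, p.1)), ?_, ?_, ?_, ?_, ?_⟩
      · intro p
        obtain ⟨x, y, hxy⟩ := hW1 (p.2, p.1)
        exact ⟨y, x, by show sw (W (p.2, p.1)) = tp y x; rw [hxy, sw_tp]⟩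
      · intro p
        exact sw_ne_zero (hW2 (p.2, p.1))
      · intro p q hpq
        rw [sw_inner]
        exact hW3 _ _ (fun h => hpq (by
          have h1 := congrArg Prod.fst h
          have h2 := congrArg Prod.snd h
          exact Prod.ext h2 h1))
      · refine ⟨(⟨0, by omega⟩, ⟨0, by omega⟩), ?_⟩
        show sw (W (⟨0, by omega⟩, ⟨0, by omega⟩)) = tp a0 b0
        rw [hW4, sw_tp]
      · refine ⟨(⟨0, by omega⟩, ⟨1, by omega⟩), ?_⟩
        show sw (W (⟨1, by omega⟩, ⟨0, by omega⟩)) = tp a1 b1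
        rw [hW5, sw_tp]
  obtain ⟨W, hW1, hW2, hW3, hW4, hW5⟩ := key2
  -- Step 3: reindex to Fin (d₁ * d₂) and get the span for free
  refine ⟨fun p => W (finProdFinEquiv.symm p), fun p => hW1 _, fun p => hW2 _, ?_, ?_, ?_⟩
  · intro p q hpq
    exact hW3 _ _ (fun h => hpq (finProdFinEquiv.symm.injective h))
  · apply span_top_of_orth
    · simp
    · intro p; exact hW2 _
    · intro p q hpq
      exact hW3 _ _ (fun h => hpq (finProdFinEquiv.symm.injective h))
  · intro i
    rcases hmem i with h | h
    · obtain ⟨p, hp⟩ := hW4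
      refine ⟨finProdFinEquiv p, ?_⟩
      show W (finProdFinEquiv.symm (finProdFinEquiv p)) = tp (a i) (b i)
      rw [Equiv.symm_apply_apply, hp]; exact h.symm
    · obtain ⟨p, hp⟩ := hW5
      refine ⟨finProdFinEquiv p, ?_⟩
      show W (finProdFinEquiv.symm (finProdFinEquiv p)) = tp (a i) (b i)
      rw [Equiv.symm_apply_apply, hp]; exact h.symm
end
end

section
/- If S is a UPB in ℂ^{d₁}⊗ℂ^{d₂} consisting of N pairwise orthogonal product unit vectors with real coordinates in the standard basis, then the state ρ = (1/(d₁d₂−N))(I − Σ_{ψ∈S} |ψ⟩⟨ψ|) satisfies ρ^Γ = ρ, where Γ is partial transpose on the second system; in particular ρ is PPT. -/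
open scoped ComplexOrder

noncomputable section

def PT {m n : ℕ} (ρ : Matrix (Fin m × Fin n) (Fin m × Fin n) ℂ) :
    Matrix (Fin m × Fin n) (Fin m × Fin n) ℂ := fun p q => ρ (p.1, q.2) (q.1, p.2)

def rhoOf {d₁ d₂ N : ℕ} (v : Fin N → EuclideanSpace ℂ (Fin d₁ × Fin d₂)) :
    Matrix (Fin d₁ × Fin d₂) (Fin d₁ × Fin d₂) ℂ :=
  ((d₁ * d₂ - N : ℕ) : ℂ)⁻¹ •
    (1 - ∑ i, Matrix.vecMulVec (v i) (fun q => starRingEnd ℂ (v i q)))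

lemma quad_nonneg {n : Type*} [Fintype n] [DecidableEq n] {N : ℕ}
    (v : Fin N → EuclideanSpace ℂ n) (hon : Orthonormal ℂ v) (x : EuclideanSpace ℂ n) :
    0 ≤ dotProduct (star (x : n → ℂ))
      (Matrix.mulVec (1 - ∑ i, Matrix.vecMulVec (v i) (fun q => starRingEnd ℂ (v i q))) x) := by
  classical
  have hx : ‖x‖ ^ 2 = ∑ p, ‖x p‖ ^ 2 := by
    rw [EuclideanSpace.norm_eq, Real.sq_sqrt (Finset.sum_nonneg fun _ _ => sq_nonneg _)]
  have h1 : dotProduct (star (x : n → ℂ)) (Matrix.mulVec 1 x) = ((‖x‖ ^ 2 : ℝ) : ℂ) := by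
    rw [Matrix.one_mulVec, hx, Complex.ofReal_sum]
    simp only [dotProduct, Pi.star_apply]
    refine Finset.sum_congr rfl fun p _ => ?_
    rw [Complex.sq_norm, Complex.normSq_eq_conj_mul_self,
      starRingEnd_apply]
  have hsum : Matrix.mulVec (∑ i, Matrix.vecMulVec (v i) (fun q => starRingEnd ℂ (v i q))) x
      = ∑ i, Matrix.mulVec (Matrix.vecMulVec (v i) (fun q => starRingEnd ℂ (v i q))) x := by
    ext p
    simp only [Matrix.mulVec, dotProduct, Matrix.sum_apply, Finset.sum_apply,
      Finset.sum_mul]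
    rw [Finset.sum_comm]
  have h2 : ∀ i, dotProduct (star (x : n → ℂ))
      (Matrix.mulVec (Matrix.vecMulVec (v i) (fun q => starRingEnd ℂ (v i q))) x)
      = ((‖(inner ℂ (v i) x : ℂ)‖ ^ 2 : ℝ) : ℂ) := by
    intro i
    have hI : (inner ℂ (v i) x : ℂ) = ∑ q, starRingEnd ℂ (v i q) * x q := by
      rw [PiLp.inner_apply]; simp [RCLike.inner_apply', mul_comm]
    have hs : ((‖(inner ℂ (v i) x : ℂ)‖ ^ 2 : ℝ) : ℂ)
        = starRingEnd ℂ (inner ℂ (v i) x : ℂ) * (inner ℂ (v i) x : ℂ) := by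
      rw [Complex.sq_norm, mul_comm, Complex.mul_conj]
    rw [hs, hI]
    simp only [dotProduct, Matrix.mulVec, Matrix.vecMulVec_apply, Pi.star_apply,
      map_sum, map_mul, starRingEnd_self_apply]
    rw [Finset.sum_mul]
    refine Finset.sum_congr rfl fun p _ => ?_
    rw [Finset.mul_sum, Finset.mul_sum]
    refine Finset.sum_congr rfl fun q _ => ?_
    simp only [starRingEnd_apply]
    ring
  have hdsum : dotProduct (star (x : n → ℂ))
      (∑ i, Matrix.mulVec (Matrix.vecMulVec (v i) (fun q => starRingEnd ℂ (v i q))) x)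
      = ∑ i, dotProduct (star (x : n → ℂ))
        (Matrix.mulVec (Matrix.vecMulVec (v i) (fun q => starRingEnd ℂ (v i q))) x) := by
    simp only [dotProduct, Finset.sum_apply, Finset.mul_sum]
    rw [Finset.sum_comm]
  rw [Matrix.sub_mulVec, dotProduct_sub, h1, hsum, hdsum]
  simp only [h2]
  rw [← Complex.ofReal_sum, ← Complex.ofReal_sub, Complex.zero_le_real]
  have := hon.sum_inner_products_le (s := Finset.univ) x
  linarith [this]

theorem real_upb_state_PT_invariant {d₁ d₂ N : ℕ} (hN : N < d₁ * d₂)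
    (v : Fin N → EuclideanSpace ℂ (Fin d₁ × Fin d₂))
    (hprod : ∀ i, ∃ (a : EuclideanSpace ℂ (Fin d₁)) (b : EuclideanSpace ℂ (Fin d₂)),
      v i = tp a b)
    (hunit : ∀ i, ‖v i‖ = 1)
    (hreal : ∀ i p, (v i p).im = 0)
    (horth : ∀ i j, i ≠ j → inner ℂ (v i) (v j) = (0 : ℂ))
    (hupb : ∀ (a : EuclideanSpace ℂ (Fin d₁)) (b : EuclideanSpace ℂ (Fin d₂)),
      (∀ i, inner ℂ (v i) (tp a b) = (0 : ℂ)) → tp a b = 0) :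
    PT (rhoOf v) = rhoOf v ∧ (PT (rhoOf v)).PosSemidef := by
  classical
  have hreal' : ∀ i p, starRingEnd ℂ (v i p) = v i p := fun i p =>
    Complex.conj_eq_iff_im.2 (hreal i p)
  -- PT invariance
  have hPT : PT (rhoOf v) = rhoOf v := by
    funext p q
    obtain ⟨p1, p2⟩ := p; obtain ⟨q1, q2⟩ := q
    simp only [PT, rhoOf, Matrix.smul_apply, Matrix.sub_apply, Matrix.sum_apply,
      Matrix.vecMulVec_apply, Matrix.one_apply, Prod.mk.injEq, smul_eq_mul]
    congr 2
    · by_cases h1 : p1 = q1 <;> by_cases h2 : p2 = q2 <;> simp [h1, h2, Ne.symm]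
    · refine Finset.sum_congr rfl fun i _ => ?_
      obtain ⟨a, b, hab⟩ := hprod i
      rw [hreal', hreal', hab]
      simp only [tp, PiLp.toLp_apply]
      ring
  refine ⟨hPT, ?_⟩
  rw [hPT]
  -- orthonormality
  have hon : Orthonormal ℂ v := by
    rw [orthonormal_iff_ite]
    intro i j
    by_cases h : i = j
    · subst h
      simp [inner_self_eq_norm_sq_to_K, hunit i]
    · simp [h, horth i j h]
  set c : ℂ := ((d₁ * d₂ - N : ℕ) : ℂ)⁻¹ with hc
  have hc_real : c = Complex.ofReal (((d₁ * d₂ - N : ℕ) : ℝ)⁻¹) := by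
    rw [hc, Complex.ofReal_inv, Complex.ofReal_natCast]
  have hc_nonneg : (0 : ℂ) ≤ c := by
    rw [hc_real, Complex.zero_le_real]
    positivity
  have hc_star : starRingEnd ℂ c = c := by
    rw [hc_real, Complex.conj_ofReal]
  set M : Matrix (Fin d₁ × Fin d₂) (Fin d₁ × Fin d₂) ℂ :=
    1 - ∑ i, Matrix.vecMulVec (v i) (fun q => starRingEnd ℂ (v i q)) with hM
  have hrho : rhoOf v = c • M := rfl
  rw [Matrix.posSemidef_iff_dotProduct_mulVec]
  constructor
  · -- Hermitian
    unfold Matrix.IsHermitian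
    funext p q
    rw [hrho]
    simp only [Matrix.conjTranspose_apply, Matrix.smul_apply, Matrix.sub_apply,
      Matrix.sum_apply, Matrix.vecMulVec_apply, Matrix.one_apply, smul_eq_mul, hM]
    simp only [← starRingEnd_apply]
    rw [map_mul, hc_star, map_sub, map_sum]
    congr 2
    · by_cases h : q = p
      · simp [h]
      · rw [if_neg h, if_neg fun hh => h hh.symm, map_zero]
    · refine Finset.sum_congr rfl fun i _ => ?_
      rw [map_mul]
      simp only [starRingEnd_self_apply, hreal']
      ring
  · -- quadratic form nonneg
    intro x
    rw [hrho, Matrix.smul_mulVec, dotProduct_smul, smul_eq_mul]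
    exact mul_nonneg hc_nonneg
      (quad_nonneg v hon (WithLp.toLp 2 x : EuclideanSpace ℂ (Fin d₁ × Fin d₂)))
end
end
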